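/- arXiv:1910.05928 — 4 statements merged into one kernel-verified Lean document; each statement's English description precedes it below -/
import Mathlib

section
/- Let G be a finite group, p a prime, and let B be a set of irreducible complex characters of G such that the sum over χ in B of χ(g)χ(h) equals 0 whenever g is p-regular and h is p-singular. Then the central idempotent sum over χ in B of e_χ = (χ(1)/|G|) Σ_{g∈G} χ(g⁻¹)g has all coefficients lying in the localization of the algebraic integers at a maximal ideal containing p; consequently B is a union of p-blocks of G. -/
open scoped BigOperators
open Finset

noncomputable section

/-- `χ : G → ℂ` is an irreducible complex character of the finite group `G`. -/
def IsIrrChar (G : Type) [Group G] [Fintype G] (χ : G → ℂ) : Prop :=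
  ∃ V : FDRep ℂ G, CategoryTheory.Simple V ∧ χ = V.character

/-- An element is `p`-regular if `p` does not divide its order. -/
def pRegular (p : ℕ) {G : Type} [Monoid G] (g : G) : Prop :=
  ¬ p ∣ orderOf g

/-- The `p`-part of a natural number. -/
def pPart (p n : ℕ) : ℕ := p ^ (n.factorization p)

/-- The `p`-part of the order of the centralizer of `g`. -/
def centOrderP (p : ℕ) {G : Type} [Group G] (g : G) : ℕ :=
  pPart p (Nat.card (Subgroup.centralizer ({g} : Set G)))

/-- The usual inner product of class functions on a finite group. -/
def innerChar (G : Type) [Group G] [Fintype G] (χ ψ : G → ℂ) : ℂ :=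
  (Fintype.card G : ℂ)⁻¹ * ∑ g : G, χ g * ψ g⁻¹

/-- The group `ℤIrr(B)` of generalized characters of a block `B`, realized as the
`ℤ`-span of the characters in `B` inside the functions `G → ℂ`. -/
def ZIrr {G : Type} [Group G] [Fintype G] (B : Finset (G → ℂ)) : Submodule ℤ (G → ℂ) :=
  Submodule.span ℤ (B : Set (G → ℂ))

/-- A character `χ ∈ B` viewed as an element of `ℤIrr(B)`. -/
def elt {G : Type} [Group G] [Fintype G] {B : Finset (G → ℂ)} (χ : G → ℂ) (h : χ ∈ B) :
    ZIrr B :=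
  ⟨χ, Submodule.subset_span (Finset.mem_coe.mpr h)⟩

/-- Broué's function `μ_I(g,h) = ∑_{χ ∈ Irr(B)} χ(g)·I(χ)(h)`. -/
def muI {G H : Type} [Group G] [Fintype G] [Group H] [Fintype H]
    {B : Finset (G → ℂ)} {B' : Finset (H → ℂ)}
    (I : ZIrr B →ₗ[ℤ] ZIrr B') (g : G) (h : H) : ℂ :=
  ∑ χ ∈ B.attach, χ.1 g * ((I (elt χ.1 χ.2) : ZIrr B') : H → ℂ) h

/-- Broué's notion of a perfect isometry: an inner-product preserving `ℤ`-linear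
bijection `ℤIrr(B) → ℤIrr(B')` satisfying the separation condition (sep) and the
integrality condition (int). -/
def IsPerfIso (p : ℕ) {G H : Type} [Group G] [Fintype G] [Group H] [Fintype H]
    (B : Finset (G → ℂ)) (B' : Finset (H → ℂ)) (I : ZIrr B ≃ₗ[ℤ] ZIrr B') : Prop :=
  (∀ x y : ZIrr B,
      innerChar H (I x : H → ℂ) (I y : H → ℂ) = innerChar G (x : G → ℂ) (y : G → ℂ)) ∧
  (∀ (g : G) (h : H), Xor' (pRegular p g) (pRegular p h) → muI I.toLinearMap g h = 0) ∧
  (∀ (g : G) (h : H), IsIntegral ℤ (muI I.toLinearMap g h / (centOrderP p g : ℂ)) ∧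
      IsIntegral ℤ (muI I.toLinearMap g h / (centOrderP p h : ℂ)))

/-- By Osima's theorem, `B` is a union of `p`-blocks iff it consists of irreducible
characters and satisfies block orthogonality between `p`-regular and `p`-singular
columns. -/
def IsBlockUnion (p : ℕ) (G : Type) [Group G] [Fintype G] (B : Finset (G → ℂ)) : Prop :=
  (∀ χ ∈ B, IsIrrChar G χ) ∧
  ∀ g h : G, pRegular p g → ¬ pRegular p h → ∑ χ ∈ B, χ g * χ h = 0

/-- A `p`-block of `G`: a minimal nonempty union of blocks. -/
def IsBlock (p : ℕ) (G : Type) [Group G] [Fintype G] (B : Finset (G → ℂ)) : Prop :=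
  IsBlockUnion p G B ∧ B.Nonempty ∧
    ∀ C ⊆ B, IsBlockUnion p G C → C = ∅ ∨ C = B

/-! A character value of an element of order `n` is a sum of `n`-th roots of unity, hence integral;
the sum of a character over a subgroup `P` is `|P|` times a multiplicity. For `g` `p`-regular and
`P` a Sylow `p`-subgroup, block orthogonality kills every term `x ≠ 1` of
`∑_{χ ∈ B} χ(g⁻¹) ∑_{x ∈ P} χ(x)`, which is therefore `∑_{χ ∈ B} χ(g⁻¹) χ(1)`. Dividing by `|P|`,
the coefficient of `g` in `∑_{χ ∈ B} e_χ` times the index `|G : P|` — a number prime to `p` — is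
an algebraic integer. For `g` `p`-singular the coefficient vanishes by orthogonality against the
column of `1`. Finally, block orthogonality passes to differences `B \ C`, so peeling off minimal
nonempty block unions splits `B` into blocks. -/

open Module Representation

theorem Module.End.isIntegral_trace_of_pow_eq_one {K V : Type*} [Field K] [IsAlgClosed K]
    [AddCommGroup V] [Module K V] [FiniteDimensional K V] {f : End K V} {n : ℕ} (hn : n ≠ 0)
    (hf : f ^ n = 1) : IsIntegral ℤ (LinearMap.trace K V f) := by
  rw [trace_eq_sum_roots_charpoly_of_splits (IsAlgClosed.splits _)]
  refine IsIntegral.multiset_sum fun μ hμ => ?_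
  have hμf : μ ∈ spectrum K f :=
    (mem_spectrum_iff_isRoot_charpoly f μ).2 (Polynomial.isRoot_of_mem_roots hμ)
  have hfin : IsOfFinOrder μ := by
    cases subsingleton_or_nontrivial (End K V)
    · simp [spectrum.of_subsingleton] at hμf
    refine isOfFinOrder_iff_pow_eq_one.2 ⟨n, Nat.pos_of_ne_zero hn, ?_⟩
    simpa [hf, spectrum.one_eq] using spectrum.pow_mem_pow f n hμf
  exact (IsPrimitiveRoot.orderOf μ).isIntegral hfin.orderOf_pos

theorem FDRep.isIntegral_character {k G : Type*} [Field k] [IsAlgClosed k] [Monoid G]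
    (V : FDRep k G) {g : G} (hg : IsOfFinOrder g) : IsIntegral ℤ (V.character g) :=
  End.isIntegral_trace_of_pow_eq_one hg.orderOf_pos.ne' <| by
    rw [← map_pow, pow_orderOf_eq_one, map_one]

theorem FDRep.sum_character_subgroup {k G : Type*} [Field k] [CharZero k] [Group G]
    (V : FDRep k G) (H : Subgroup G) [Fintype H] :
    ∑ h : H, V.character h = Nat.card H * finrank k (invariants (V.ρ.comp H.subtype)) := by
  have : Invertible (Nat.card H : k) := invertibleOfNonzero (by simp)
  have h : (Nat.card H : k)⁻¹ * ∑ h : H, V.character h =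
      finrank k (invariants (V.ρ.comp H.subtype)) :=
    (FDRep.of (V.ρ.comp H.subtype)).average_char_eq_finrank_invariants
  rw [← h, mul_inv_cancel_left₀ (by simp)]

section pRegular

variable {p : ℕ} {G : Type}

theorem pRegular_one [Monoid G] [hp : Fact p.Prime] : pRegular p (1 : G) := by
  simpa [pRegular] using hp.out.ne_one

theorem pRegular_inv [Group G] {g : G} : pRegular p g⁻¹ ↔ pRegular p g := by
  rw [pRegular, pRegular, orderOf_inv]

theorem pRegular_subgroup_coe [Group G] {H : Subgroup G} {x : H} :
    pRegular p (x : G) ↔ pRegular p x := by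
  rw [pRegular, pRegular, Subgroup.orderOf_coe]

theorem IsPGroup.not_pRegular [Group G] [Fact p.Prime] (hG : IsPGroup p G) {g : G} (hg : g ≠ 1) :
    ¬ pRegular p g := by
  obtain ⟨k, hk⟩ := IsPGroup.iff_orderOf.1 hG g
  have hk0 : k ≠ 0 := by
    rintro rfl
    exact hg (orderOf_eq_one_iff.1 (by rwa [pow_zero] at hk))
  rw [pRegular, hk, not_not]
  exact dvd_pow_self p hk0

end pRegular

theorem sum_mul_sum_subgroup_eq_of_isPGroup {p : ℕ} [Fact p.Prime] {G : Type} [Group G]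
    {B : Finset (G → ℂ)}
    (horth : ∀ g h : G, pRegular p g → ¬ pRegular p h → ∑ χ ∈ B, χ g * χ h = 0)
    {g : G} (hg : pRegular p g) {P : Subgroup G} [Fintype P] (hP : IsPGroup p P) :
    ∑ χ ∈ B, χ g * ∑ x : P, χ x = ∑ χ ∈ B, χ g * χ 1 := by
  simp_rw [mul_sum]
  rw [sum_comm, Fintype.sum_eq_single (1 : P) fun x hx => horth g x hg ?_]
  · simp
  · rw [pRegular_subgroup_coe]
    exact hP.not_pRegular hx

/-- The coefficient of `g` in the central idempotent `∑_{χ ∈ B} e_χ`. -/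
def idempotentCoeff {G : Type} [Group G] [Fintype G] (B : Finset (G → ℂ)) (g : G) : ℂ :=
  ∑ χ ∈ B, χ 1 / Fintype.card G * χ g⁻¹

section idempotentCoeff

variable {p : ℕ} [Fact p.Prime] {G : Type} [Group G] [Fintype G] {B : Finset (G → ℂ)}

theorem idempotentCoeff_eq_zero
    (horth : ∀ g h : G, pRegular p g → ¬ pRegular p h → ∑ χ ∈ B, χ g * χ h = 0)
    {g : G} (hg : ¬ pRegular p g) : idempotentCoeff B g = 0 := by
  simp_rw [idempotentCoeff, div_mul_eq_mul_div, ← sum_div]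
  rw [horth 1 g⁻¹ pRegular_one (by rwa [pRegular_inv]), zero_div]

theorem idempotentCoeff_mul_index_eq
    (horth : ∀ g h : G, pRegular p g → ¬ pRegular p h → ∑ χ ∈ B, χ g * χ h = 0)
    {g : G} (hg : pRegular p g) {P : Subgroup G} [Fintype P] (hP : IsPGroup p P) :
    idempotentCoeff B g * P.index = ∑ χ ∈ B, χ g⁻¹ * ((∑ x : P, χ x) / Nat.card P) := by
  have hcard : (Fintype.card G : ℂ) = Nat.card P * P.index := by
    rw [← Nat.card_eq_fintype_card, ← P.card_mul_index, Nat.cast_mul]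
  have hindex : (P.index : ℂ) ≠ 0 := by simp [P.index_ne_zero_of_finite]
  calc idempotentCoeff B g * P.index = (∑ χ ∈ B, χ g⁻¹ * χ 1) / Nat.card P := by
        rw [idempotentCoeff, hcard, sum_mul, sum_div]
        refine sum_congr rfl fun χ _ => ?_
        field_simp
    _ = (∑ χ ∈ B, χ g⁻¹ * ∑ x : P, χ x) / Nat.card P := by
        rw [sum_mul_sum_subgroup_eq_of_isPGroup horth (pRegular_inv.2 hg) hP]
    _ = ∑ χ ∈ B, χ g⁻¹ * ((∑ x : P, χ x) / Nat.card P) := by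
        rw [sum_div]
        simp_rw [mul_div_assoc]

theorem isIntegral_idempotentCoeff_mul_index (hirr : ∀ χ ∈ B, IsIrrChar G χ)
    (horth : ∀ g h : G, pRegular p g → ¬ pRegular p h → ∑ χ ∈ B, χ g * χ h = 0)
    {g : G} (hg : pRegular p g) {P : Subgroup G} (hP : IsPGroup p P) :
    IsIntegral ℤ (idempotentCoeff B g * P.index) := by
  have := Fintype.ofFinite P
  rw [idempotentCoeff_mul_index_eq horth hg hP]
  refine IsIntegral.sum _ fun χ hχ => ?_
  obtain ⟨V, -, rfl⟩ := hirr χ hχ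
  rw [V.sum_character_subgroup, mul_div_cancel_left₀ _ (by simp)]
  exact (V.isIntegral_character (isOfFinOrder_of_finite _)).mul (isIntegral_natCast _)

end idempotentCoeff

theorem Ideal.natCast_notMem_of_coprime {R : Type*} [CommRing R] {I : Ideal R} (hI : I ≠ ⊤)
    {p m : ℕ} (hp : (p : R) ∈ I) (hpm : p.Coprime m) : (m : R) ∉ I := by
  intro hm
  obtain ⟨u, v, huv⟩ := (Nat.isCoprime_iff_coprime.2 hpm).map (Int.castRingHom R)
  refine hI ((I.eq_top_iff_one).2 ?_)
  rw [← huv]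
  simp only [eq_intCast, Int.cast_natCast]
  exact I.add_mem (I.mul_mem_left _ hp) (I.mul_mem_left _ hm)

section IsBlockUnion

variable {p : ℕ} {G : Type} [Group G] [Fintype G] {B C : Finset (G → ℂ)}

theorem IsBlockUnion.sdiff (hB : IsBlockUnion p G B) (hC : IsBlockUnion p G C) (hCB : C ⊆ B) :
    IsBlockUnion p G (B \ C) := by
  refine ⟨fun χ hχ => hB.1 χ (mem_sdiff.1 hχ).1, fun g h hg hh => ?_⟩
  rw [sum_sdiff_eq_sub hCB, hB.2 g h hg hh, hC.2 g h hg hh, sub_zero]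

theorem IsBlockUnion.exists_isBlock_subset (hB : IsBlockUnion p G B) (hne : B.Nonempty) :
    ∃ C ⊆ B, IsBlock p G C := by
  obtain ⟨C, hCB, hmin⟩ :=
    exists_minimal_le_of_wellFoundedLT (fun C => C.Nonempty ∧ IsBlockUnion p G C) B ⟨hne, hB⟩
  refine ⟨C, hCB, hmin.1.2, hmin.1.1, fun C' hC'C hC' => ?_⟩
  rcases C'.eq_empty_or_nonempty with hC'ne | hC'ne
  · exact Or.inl hC'ne
  · exact Or.inr (hmin.eq_of_le ⟨hC'ne, hC'⟩ hC'C)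

theorem IsBlockUnion.exists_eq_sup_isBlock (hB : IsBlockUnion p G B) :
    ∃ 𝒮 : Finset (Finset (G → ℂ)), (∀ C ∈ 𝒮, IsBlock p G C) ∧ B = 𝒮.sup id := by
  classical
  induction B using Finset.strongInduction with
  | H B ih =>
    rcases B.eq_empty_or_nonempty with rfl | hne
    · exact ⟨∅, by simp, rfl⟩
    obtain ⟨C, hCB, hC⟩ := hB.exists_isBlock_subset hne
    obtain ⟨𝒮, h𝒮, hsup⟩ := ih (B \ C) (sdiff_ssubset hCB hC.2.1) (hB.sdiff hC.1 hCB)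
    refine ⟨insert C 𝒮, forall_mem_insert _ _ _ |>.2 ⟨hC, h𝒮⟩, ?_⟩
    rw [sup_insert, ← hsup, id, sup_eq_union, union_sdiff_of_subset hCB]

end IsBlockUnion

/-- **Osima's theorem.** If the sum `∑_{χ∈B} χ(g)χ(h)` vanishes whenever `g` is
`p`-regular and `h` is `p`-singular, then every coefficient of the central idempotent
`∑_{χ∈B} e_χ` lies in the localization of the algebraic integers at any maximal ideal
containing `p`; consequently `B` is a union of `p`-blocks. -/
theorem osima (p : ℕ) [Fact p.Prime] (G : Type) [Group G] [Fintype G]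
    (B : Finset (G → ℂ))
    (hirr : ∀ χ ∈ B, IsIrrChar G χ)
    (horth : ∀ g h : G, pRegular p g → ¬ pRegular p h → ∑ χ ∈ B, χ g * χ h = 0)
    (M : Ideal (integralClosure ℤ ℂ)) (hM : M.IsMaximal)
    (hpM : (p : integralClosure ℤ ℂ) ∈ M) :
    (∀ g : G, ∃ r s : integralClosure ℤ ℂ, s ∉ M ∧
        (∑ χ ∈ B, χ 1 / (Fintype.card G : ℂ) * χ g⁻¹) * (s : ℂ) = (r : ℂ)) ∧
    ∃ 𝒮 : Finset (Finset (G → ℂ)), (∀ C ∈ 𝒮, IsBlock p G C) ∧ B = 𝒮.sup id := by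
  refine ⟨fun g => ?_, IsBlockUnion.exists_eq_sup_isBlock ⟨hirr, horth⟩⟩
  by_cases hg : pRegular p g
  · obtain ⟨P⟩ : Nonempty (Sylow p G) := inferInstance
    have hindex : (P.index : integralClosure ℤ ℂ) ∉ M :=
      Ideal.natCast_notMem_of_coprime hM.ne_top hpM
        ((Fact.out : p.Prime).coprime_iff_not_dvd.2 P.not_dvd_index)
    exact ⟨⟨_, isIntegral_idempotentCoeff_mul_index hirr horth hg P.isPGroup'⟩, P.index, hindex,
      by simp [idempotentCoeff]⟩
  · refine ⟨0, 1, hM.isPrime.one_notMem, ?_⟩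
    simpa [idempotentCoeff] using idempotentCoeff_eq_zero horth hg

end
end

section
/- Let I, J : ℤIrr(B) → ℤIrr(B') be perfect isometries between p-blocks such that I(χ) = ±J(χ) for every χ ∈ Irr(B). Then I = J or I = −J; i.e., the sign is uniform. -/
open scoped BigOperators
open Finset

noncomputable section

/-! Let `S` be the set of `χ ∈ Irr(B)` with `I(χ) ≠ J(χ)`, i.e. `I(χ) = -J(χ)`. Then
`μ_I(g,h) - μ_J(g,h) = -2 ∑_{χ ∈ S} χ(g) J(χ)(h)`. Both `μ_I` and `μ_J` vanish when exactly one
of `g`, `h` is `p`-regular, and the `J(χ)` are orthonormal, so pairing the columns at `g` and `g'`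
over `H` gives `4 ∑_{χ ∈ S} χ(g) χ(g') = 0` for `g` `p`-regular and `g'` `p`-singular. By Osima's
criterion `S` is a union of blocks inside the block `B`, so `S = ∅` (`I = J`) or `S = Irr(B)`
(`I = -J`). -/

variable {G H : Type} [Group G] [Fintype G] [Group H] [Fintype H]

open scoped Classical in
lemma innerChar_character (V W : FDRep ℂ G) [CategoryTheory.Simple V] [CategoryTheory.Simple W] :
    innerChar G V.character W.character = if Nonempty (V ≅ W) then 1 else 0 := by
  let : Invertible (Nat.card G : ℂ) := invertibleOfNonzero (Nat.cast_ne_zero.mpr Nat.card_pos.ne')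
  rw [innerChar, Fintype.card_eq_nat_card]
  exact FDRep.char_orthonormal V W

open scoped Classical in
lemma innerChar_eq_ite_of_isIrrChar {χ ψ : G → ℂ} (hχ : IsIrrChar G χ) (hψ : IsIrrChar G ψ) :
    innerChar G χ ψ = if χ = ψ then 1 else 0 := by
  obtain ⟨V, hV, rfl⟩ := hχ
  obtain ⟨W, hW, rfl⟩ := hψ
  by_cases h : V.character = W.character
  · rw [if_pos h, ← h, innerChar_character, if_pos ⟨CategoryTheory.Iso.refl V⟩]
  · rw [if_neg h, innerChar_character, if_neg fun ⟨e⟩ => h (FDRep.char_iso e)]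

lemma innerChar_sum_mul_sum {ι : Type*} [DecidableEq ι] (s : Finset ι) (a b : ι → ℂ)
    (ψ : ι → H → ℂ) (hψ : ∀ i ∈ s, ∀ j ∈ s, innerChar H (ψ i) (ψ j) = if i = j then 1 else 0) :
    innerChar H (fun h => ∑ i ∈ s, a i * ψ i h) (fun h => ∑ j ∈ s, b j * ψ j h) =
      ∑ i ∈ s, a i * b i := by
  have expand : innerChar H (fun h => ∑ i ∈ s, a i * ψ i h) (fun h => ∑ j ∈ s, b j * ψ j h) =
      ∑ i ∈ s, ∑ j ∈ s, a i * b j * innerChar H (ψ i) (ψ j) := by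
    simp only [innerChar]
    simp only [Finset.sum_mul_sum]
    simp only [Finset.mul_sum]
    rw [Finset.sum_comm]
    refine Finset.sum_congr rfl fun i _ => ?_
    rw [Finset.sum_comm]
    exact Finset.sum_congr rfl fun j _ => Finset.sum_congr rfl fun h _ => by ring
  rw [expand]
  refine Finset.sum_congr rfl fun i hi => ?_
  rw [Finset.sum_congr rfl fun j hj => by rw [hψ i hi j hj]]
  simp only [mul_ite, mul_one, mul_zero, Finset.sum_ite_eq, if_pos hi]

lemma innerChar_eq_zero_of_eq_zero_off_pRegular (p : ℕ) {f₁ f₂ : H → ℂ}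
    (h₁ : ∀ h, ¬ pRegular p h → f₁ h = 0) (h₂ : ∀ h, pRegular p h → f₂ h = 0) :
    innerChar H f₁ f₂ = 0 := by
  rw [innerChar, Finset.sum_eq_zero fun h _ => ?_, mul_zero]
  by_cases hh : pRegular p h
  · rw [h₂ h⁻¹ (by rwa [pRegular, orderOf_inv]), mul_zero]
  · rw [h₁ h hh, zero_mul]

lemma ZIrr.linearMap_ext {M : Type*} [AddCommGroup M] {B : Finset (G → ℂ)}
    {f g : ZIrr B →ₗ[ℤ] M} (h : ∀ χ (hχ : χ ∈ B), f (elt χ hχ) = g (elt χ hχ)) : f = g :=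
  LinearMap.ext_on Submodule.span_span_coe_preimage fun x hx => h x.1 hx

variable {B : Finset (G → ℂ)} {B' : Finset (H → ℂ)}

lemma IsPerfIso.innerChar_apply_elt {p : ℕ} (hB : ∀ χ ∈ B, IsIrrChar G χ)
    {J : ZIrr B ≃ₗ[ℤ] ZIrr B'} (hJ : IsPerfIso p B B' J) (χ ψ : {χ // χ ∈ B}) :
    innerChar H (J (elt χ.1 χ.2)) (J (elt ψ.1 ψ.2)) = if χ = ψ then 1 else 0 := by
  rw [hJ.1, elt, elt, innerChar_eq_ite_of_isIrrChar (hB χ.1 χ.2) (hB ψ.1 ψ.2)]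
  exact if_congr Subtype.ext_iff.symm rfl rfl

open scoped Classical in
def signChangeSet (I J : ZIrr B →ₗ[ℤ] ZIrr B') : Finset {χ // χ ∈ B} :=
  B.attach.filter fun χ => I (elt χ.1 χ.2) ≠ J (elt χ.1 χ.2)

lemma muI_sub_muI_eq_sum_signChangeSet {I J : ZIrr B →ₗ[ℤ] ZIrr B'}
    (hsign : ∀ χ (hχ : χ ∈ B), I (elt χ hχ) = J (elt χ hχ) ∨ I (elt χ hχ) = -J (elt χ hχ))
    (g : G) (h : H) :
    muI I g h - muI J g h =
      ∑ χ ∈ signChangeSet I J, -2 * χ.1 g * (J (elt χ.1 χ.2) : H → ℂ) h := by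
  classical
  rw [muI, muI, ← Finset.sum_sub_distrib, signChangeSet, Finset.sum_filter]
  refine Finset.sum_congr rfl fun χ _ => ?_
  split_ifs with hne
  · obtain heq | hneg := hsign χ.1 χ.2
    · exact absurd heq hne
    · rw [hneg, Submodule.coe_neg, Pi.neg_apply]
      ring
  · rw [not_not.mp hne, sub_self]

lemma eq_neg_of_image_signChangeSet {I J : ZIrr B →ₗ[ℤ] ZIrr B'}
    (hsign : ∀ χ (hχ : χ ∈ B), I (elt χ hχ) = J (elt χ hχ) ∨ I (elt χ hχ) = -J (elt χ hχ))
    (hS : (signChangeSet I J).image Subtype.val = B) :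
    I = -J := by
  refine ZIrr.linearMap_ext fun χ hχ => (hsign χ hχ).resolve_left fun heq => ?_
  obtain ⟨ψ, hψ, rfl⟩ := Finset.mem_image.mp (hS.symm ▸ hχ : χ ∈ _)
  exact (Finset.mem_filter.mp hψ).2 heq

lemma eq_of_signChangeSet_eq_empty {I J : ZIrr B →ₗ[ℤ] ZIrr B'}
    (hS : signChangeSet I J = ∅) : I = J :=
  ZIrr.linearMap_ext fun χ hχ => by
    by_contra hne
    have hχS : ⟨χ, hχ⟩ ∈ signChangeSet I J := Finset.mem_filter.mpr ⟨Finset.mem_attach _ _, hne⟩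
    exact Finset.notMem_empty _ (hS ▸ hχS)

section PerfIso

variable {p : ℕ} {I J : ZIrr B ≃ₗ[ℤ] ZIrr B'}

lemma sum_signChangeSet_mul_eq_zero (hB : ∀ χ ∈ B, IsIrrChar G χ)
    (hI : IsPerfIso p B B' I) (hJ : IsPerfIso p B B' J)
    (hsign : ∀ χ (hχ : χ ∈ B), I (elt χ hχ) = J (elt χ hχ) ∨ I (elt χ hχ) = -J (elt χ hχ))
    {g g' : G} (hg : pRegular p g) (hg' : ¬ pRegular p g') :
    ∑ χ ∈ signChangeSet I.toLinearMap J.toLinearMap, χ.1 g * χ.1 g' = 0 := by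
  set S := signChangeSet I.toLinearMap J.toLinearMap
  let d : G → H → ℂ := fun g h => muI I.toLinearMap g h - muI J.toLinearMap g h
  have hd_sep : ∀ g h, pRegular p g ∧ ¬ pRegular p h ∨ pRegular p h ∧ ¬ pRegular p g →
      d g h = 0 := fun g h hx => by
    simp only [d, hI.2.1 g h hx, hJ.2.1 g h hx, sub_zero]
  have hzero : innerChar H (d g) (d g') = 0 :=
    innerChar_eq_zero_of_eq_zero_off_pRegular p (fun h hh => hd_sep g h (Or.inl ⟨hg, hh⟩))
      fun h hh => hd_sep g' h (Or.inr ⟨hh, hg'⟩)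
  have hparseval : innerChar H (d g) (d g') = 4 * ∑ χ ∈ S, χ.1 g * χ.1 g' := by
    have hd : ∀ g, d g = fun h => ∑ χ ∈ S, -2 * χ.1 g * (J (elt χ.1 χ.2) : H → ℂ) h :=
      fun g => funext (muI_sub_muI_eq_sum_signChangeSet hsign g)
    rw [hd, hd, innerChar_sum_mul_sum S _ _ _ fun χ _ ψ _ => hJ.innerChar_apply_elt hB χ ψ,
      Finset.mul_sum]
    exact Finset.sum_congr rfl fun χ _ => by ring
  simpa using hparseval.symm.trans hzero

lemma isBlockUnion_image_signChangeSet (hB : ∀ χ ∈ B, IsIrrChar G χ)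
    (hI : IsPerfIso p B B' I) (hJ : IsPerfIso p B B' J)
    (hsign : ∀ χ (hχ : χ ∈ B), I (elt χ hχ) = J (elt χ hχ) ∨ I (elt χ hχ) = -J (elt χ hχ)) :
    IsBlockUnion p G ((signChangeSet I.toLinearMap J.toLinearMap).image Subtype.val) := by
  refine ⟨fun χ hχ => ?_, fun g g' hg hg' => ?_⟩
  · obtain ⟨ψ, -, rfl⟩ := Finset.mem_image.mp hχ
    exact hB ψ.1 ψ.2
  · rw [Finset.sum_image fun χ _ ψ _ => Subtype.ext]
    exact sum_signChangeSet_mul_eq_zero hB hI hJ hsign hg hg'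

end PerfIso

theorem perfect_isometry_sign_unique_general (p : ℕ)
    (G H : Type) [Group G] [Fintype G] [Group H] [Fintype H]
    (B : Finset (G → ℂ)) (B' : Finset (H → ℂ))
    (hB : IsBlock p G B)
    (I J : ZIrr B ≃ₗ[ℤ] ZIrr B')
    (hI : IsPerfIso p B B' I) (hJ : IsPerfIso p B B' J)
    (hsign : ∀ χ (hχ : χ ∈ B),
      I (elt χ hχ) = J (elt χ hχ) ∨ I (elt χ hχ) = -(J (elt χ hχ))) :
    (∀ x : ZIrr B, I x = J x) ∨ (∀ x : ZIrr B, I x = -(J x)) := by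
  obtain hS | hS := hB.2.2 _ (Finset.image_subset_iff.mpr fun χ _ => χ.2)
    (isBlockUnion_image_signChangeSet hB.1.1 hI hJ hsign)
  · exact Or.inl (LinearMap.congr_fun (eq_of_signChangeSet_eq_empty (Finset.image_eq_empty.mp hS)))
  · exact Or.inr (LinearMap.congr_fun (eq_neg_of_image_signChangeSet hsign hS))

/-- Uniqueness of signs: if two perfect isometries agree up to sign on every
irreducible character of `B`, then they agree up to one global sign: `I = J` or
`I = -J`. -/
theorem perfect_isometry_sign_unique (p : ℕ) [Fact p.Prime]
    (G H : Type) [Group G] [Fintype G] [Group H] [Fintype H]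
    (B : Finset (G → ℂ)) (B' : Finset (H → ℂ))
    (hB : IsBlock p G B) (hB' : IsBlock p H B')
    (I J : ZIrr B ≃ₗ[ℤ] ZIrr B')
    (hI : IsPerfIso p B B' I) (hJ : IsPerfIso p B B' J)
    (hsign : ∀ χ (hχ : χ ∈ B),
      I (elt χ hχ) = J (elt χ hχ) ∨ I (elt χ hχ) = -(J (elt χ hχ))) :
    (∀ x : ZIrr B, I x = J x) ∨ (∀ x : ZIrr B, I x = -(J x)) :=
  perfect_isometry_sign_unique_general p G H B B' hB I J hI hJ hsign

end
end

section
/- Let G = S₃ and p = 3, and let B be the (unique, principal) 3-block of G with Irr(B) = {χ₁ (trivial), χ₂ (sign), χ₃ (degree 2)}. Then the ℤ-linear map determined by χ₁ ↦ χ₁, χ₂ ↦ −χ₃, χ₃ ↦ −χ₂ is a perfect isometry of B with itself whose sign is not uniform. -/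
open scoped BigOperators
open Finset

noncomputable section

/-- The trivial character of `S₃`. -/
def chiTriv : Equiv.Perm (Fin 3) → ℂ := fun _ => 1

/-- The sign character of `S₃`. -/
def chiSgn : Equiv.Perm (Fin 3) → ℂ := fun g => ((Equiv.Perm.sign g : ℤ) : ℂ)

/-- The degree-2 (standard) character of `S₃`: number of fixed points minus 1. -/
def chiStd : Equiv.Perm (Fin 3) → ℂ :=
  fun g => ((Finset.univ.filter fun x : Fin 3 => g x = x).card : ℂ) - 1

/-- The principal 3-block of `S₃`, consisting of all three irreducible characters. -/
def BS3 : Finset (Equiv.Perm (Fin 3) → ℂ) :=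
  letI : DecidableEq (Equiv.Perm (Fin 3) → ℂ) := Classical.decEq _
  {chiTriv, chiSgn, chiStd}

namespace S3PI
abbrev G3 := Equiv.Perm (Fin 3)
def t01 : G3 := Equiv.swap 0 1
def t02 : G3 := Equiv.swap 0 2
def t12 : G3 := Equiv.swap 1 2
def c3 : G3 := finRotate 3
def c3' : G3 := c3 * c3

lemma univ_eq : (Finset.univ : Finset G3) = {1, t01, t02, t12, c3, c3'} := by decide

lemma sum_univ (F : G3 → ℂ) :
    ∑ g : G3, F g = F 1 + F t01 + F t02 + F t12 + F c3 + F c3' := by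
  rw [univ_eq, Finset.sum_insert (by decide), Finset.sum_insert (by decide),
    Finset.sum_insert (by decide), Finset.sum_insert (by decide),
    Finset.sum_insert (by decide), Finset.sum_singleton]
  ring

-- inverses
@[simp] lemma inv_one' : (1 : G3)⁻¹ = 1 := by decide
@[simp] lemma inv_t01 : t01⁻¹ = t01 := by decide
@[simp] lemma inv_t02 : t02⁻¹ = t02 := by decide
@[simp] lemma inv_t12 : t12⁻¹ = t12 := by decide
@[simp] lemma inv_c3 : c3⁻¹ = c3' := by decide
@[simp] lemma inv_c3' : c3'⁻¹ = c3 := by decide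

-- character values
@[simp] lemma triv_val (g : G3) : chiTriv g = 1 := rfl
@[simp] lemma sgn_one : chiSgn 1 = 1 := by
  simp [chiSgn, show Equiv.Perm.sign (1 : G3) = 1 from by decide]
@[simp] lemma sgn_t01 : chiSgn t01 = -1 := by
  simp [chiSgn, show Equiv.Perm.sign t01 = -1 from by decide]
@[simp] lemma sgn_t02 : chiSgn t02 = -1 := by
  simp [chiSgn, show Equiv.Perm.sign t02 = -1 from by decide]
@[simp] lemma sgn_t12 : chiSgn t12 = -1 := by
  simp [chiSgn, show Equiv.Perm.sign t12 = -1 from by decide]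
@[simp] lemma sgn_c3 : chiSgn c3 = 1 := by
  simp [chiSgn, show Equiv.Perm.sign c3 = 1 from by decide]
@[simp] lemma sgn_c3' : chiSgn c3' = 1 := by
  simp [chiSgn, show Equiv.Perm.sign c3' = 1 from by decide]
@[simp] lemma std_one : chiStd 1 = 2 := by
  rw [chiStd, show (Finset.univ.filter fun x : Fin 3 => (1 : G3) x = x).card = 3 from by decide]
  norm_num
@[simp] lemma std_t01 : chiStd t01 = 0 := by
  rw [chiStd, show (Finset.univ.filter fun x : Fin 3 => t01 x = x).card = 1 from by decide]
  norm_num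
@[simp] lemma std_t02 : chiStd t02 = 0 := by
  rw [chiStd, show (Finset.univ.filter fun x : Fin 3 => t02 x = x).card = 1 from by decide]
  norm_num
@[simp] lemma std_t12 : chiStd t12 = 0 := by
  rw [chiStd, show (Finset.univ.filter fun x : Fin 3 => t12 x = x).card = 1 from by decide]
  norm_num
@[simp] lemma std_c3 : chiStd c3 = -1 := by
  rw [chiStd, show (Finset.univ.filter fun x : Fin 3 => c3 x = x).card = 0 from by decide]
  norm_num
@[simp] lemma std_c3' : chiStd c3' = -1 := by
  rw [chiStd, show (Finset.univ.filter fun x : Fin 3 => c3' x = x).card = 0 from by decide]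
  norm_num

lemma card6 : ((Fintype.card G3 : ℂ)) = 6 := by
  rw [show Fintype.card G3 = 6 from by decide]; norm_num

-- inner product table
lemma ip11 : innerChar G3 chiTriv chiTriv = 1 := by
  rw [innerChar, sum_univ, card6]; simp; try norm_num
lemma ip12 : innerChar G3 chiTriv chiSgn = 0 := by
  rw [innerChar, sum_univ, card6]; simp; try norm_num
lemma ip13 : innerChar G3 chiTriv chiStd = 0 := by
  rw [innerChar, sum_univ, card6]; simp; try norm_num
lemma ip21 : innerChar G3 chiSgn chiTriv = 0 := by
  rw [innerChar, sum_univ, card6]; simp; try norm_num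
lemma ip22 : innerChar G3 chiSgn chiSgn = 1 := by
  rw [innerChar, sum_univ, card6]; simp; try norm_num
lemma ip23 : innerChar G3 chiSgn chiStd = 0 := by
  rw [innerChar, sum_univ, card6]; simp; try norm_num
lemma ip31 : innerChar G3 chiStd chiTriv = 0 := by
  rw [innerChar, sum_univ, card6]; simp; try norm_num
lemma ip32 : innerChar G3 chiStd chiSgn = 0 := by
  rw [innerChar, sum_univ, card6]; simp; try norm_num
lemma ip33 : innerChar G3 chiStd chiStd = 1 := by
  rw [innerChar, sum_univ, card6]; simp; try norm_num

-- orders and centralizers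
lemma key (g : G3) :
    (chiSgn g = 1 ∧ chiStd g = 2 ∧ pRegular 3 g ∧ (centOrderP 3 g : ℂ) = 3) ∨
    (chiSgn g = -1 ∧ chiStd g = 0 ∧ pRegular 3 g ∧ (centOrderP 3 g : ℂ) = 1) ∨
    (chiSgn g = 1 ∧ chiStd g = -1 ∧ ¬ pRegular 3 g ∧ (centOrderP 3 g : ℂ) = 3) := by
  have hcent : ∀ (h : G3) (S : Set G3) (n : ℕ),
      (Subgroup.centralizer ({h} : Set G3) : Set G3) = S → S.ncard = n →
      Nat.card (Subgroup.centralizer ({h} : Set G3)) = n := by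
    intro h S n hS hn
    rw [← SetLike.coe_sort_coe, hS, Nat.card_coe_set_eq, hn]
  have hc : ∀ h : G3, h = 1 ∨ h = t01 ∨ h = t02 ∨ h = t12 ∨ h = c3 ∨ h = c3' := by decide
  have p31 : pPart 3 1 = 1 := by rw [pPart, Nat.factorization_one]; rfl
  have p32 : pPart 3 2 = 1 := by rw [pPart, Nat.factorization_eq_zero_of_not_dvd (by norm_num)]; rfl
  have p33 : pPart 3 3 = 3 := by rw [pPart, Nat.Prime.factorization_self (by norm_num)]; rfl
  have p36 : pPart 3 6 = 3 := by
    rw [pPart, show (6:ℕ) = 3 * 2 by norm_num, Nat.factorization_mul (by norm_num) (by norm_num),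
      Finsupp.add_apply, Nat.Prime.factorization_self (by norm_num),
      Nat.factorization_eq_zero_of_not_dvd (by norm_num)]; rfl
  rcases hc g with rfl | rfl | rfl | rfl | rfl | rfl
  · refine Or.inl ⟨sgn_one, std_one, ?_, ?_⟩
    · simp [pRegular]
    · rw [centOrderP, hcent 1 Set.univ 6 ?_ ?_, p36]
      · norm_num
      · ext x
        simp only [SetLike.mem_coe, Subgroup.mem_centralizer_iff, Set.mem_singleton_iff,
          forall_eq, Set.mem_univ, iff_true]
        group
      · rw [Set.ncard_univ, Nat.card_eq_fintype_card]; decide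
  · refine Or.inr (Or.inl ⟨sgn_t01, std_t01, ?_, ?_⟩)
    · rw [pRegular, orderOf_eq_prime (by decide : t01 ^ 2 = 1) (by decide)]; norm_num
    · rw [centOrderP, hcent t01 {1, t01} 2 ?_ ?_, p32]
      · norm_num
      · ext x
        simp only [SetLike.mem_coe, Subgroup.mem_centralizer_iff, Set.mem_singleton_iff,
          forall_eq, Set.mem_insert_iff, Set.mem_singleton_iff]
        revert x; decide
      · rw [Set.ncard_pair (by decide)]
  · refine Or.inr (Or.inl ⟨sgn_t02, std_t02, ?_, ?_⟩)
    · rw [pRegular, orderOf_eq_prime (by decide : t02 ^ 2 = 1) (by decide)]; norm_num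
    · rw [centOrderP, hcent t02 {1, t02} 2 ?_ ?_, p32]
      · norm_num
      · ext x
        simp only [SetLike.mem_coe, Subgroup.mem_centralizer_iff, Set.mem_singleton_iff,
          forall_eq, Set.mem_insert_iff, Set.mem_singleton_iff]
        revert x; decide
      · rw [Set.ncard_pair (by decide)]
  · refine Or.inr (Or.inl ⟨sgn_t12, std_t12, ?_, ?_⟩)
    · rw [pRegular, orderOf_eq_prime (by decide : t12 ^ 2 = 1) (by decide)]; norm_num
    · rw [centOrderP, hcent t12 {1, t12} 2 ?_ ?_, p32]
      · norm_num
      · ext x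
        simp only [SetLike.mem_coe, Subgroup.mem_centralizer_iff, Set.mem_singleton_iff,
          forall_eq, Set.mem_insert_iff, Set.mem_singleton_iff]
        revert x; decide
      · rw [Set.ncard_pair (by decide)]
  · refine Or.inr (Or.inr ⟨sgn_c3, std_c3, ?_, ?_⟩)
    · rw [pRegular, orderOf_eq_prime (by decide : c3 ^ 3 = 1) (by decide)]; simp
    · rw [centOrderP, hcent c3 {1, c3, c3'} 3 ?_ ?_, p33]
      · norm_num
      · ext x
        simp only [SetLike.mem_coe, Subgroup.mem_centralizer_iff, Set.mem_singleton_iff,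
          forall_eq, Set.mem_insert_iff, Set.mem_singleton_iff]
        revert x; decide
      · rw [Set.ncard_insert_of_notMem (by decide), Set.ncard_pair (by decide)]
  · refine Or.inr (Or.inr ⟨sgn_c3', std_c3', ?_, ?_⟩)
    · rw [pRegular, orderOf_eq_prime (by decide : c3' ^ 3 = 1) (by decide)]; simp
    · rw [centOrderP, hcent c3' {1, c3, c3'} 3 ?_ ?_, p33]
      · norm_num
      · ext x
        simp only [SetLike.mem_coe, Subgroup.mem_centralizer_iff, Set.mem_singleton_iff,
          forall_eq, Set.mem_insert_iff, Set.mem_singleton_iff]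
        revert x; decide
      · rw [Set.ncard_insert_of_notMem (by decide), Set.ncard_pair (by decide)]

lemma ne12 : chiTriv ≠ chiSgn := fun h => by
  have := congrFun h t01; rw [triv_val, sgn_t01] at this; norm_num at this
lemma ne13 : chiTriv ≠ chiStd := fun h => by
  have := congrFun h 1; rw [triv_val, std_one] at this; norm_num at this
lemma ne23 : chiSgn ≠ chiStd := fun h => by
  have := congrFun h 1; rw [sgn_one, std_one] at this; norm_num at this

lemma mem1 : chiTriv ∈ BS3 := by
  unfold BS3; letI : DecidableEq (G3 → ℂ) := Classical.decEq _
  apply Finset.mem_insert_self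
lemma mem2 : chiSgn ∈ BS3 := by
  unfold BS3; letI : DecidableEq (G3 → ℂ) := Classical.decEq _
  apply Finset.mem_insert_of_mem; apply Finset.mem_insert_self
lemma mem3 : chiStd ∈ BS3 := by
  unfold BS3; letI : DecidableEq (G3 → ℂ) := Classical.decEq _
  apply Finset.mem_insert_of_mem; apply Finset.mem_insert_of_mem
  apply Finset.mem_singleton_self

lemma mem_BS3 {χ : G3 → ℂ} (h : χ ∈ BS3) : χ = chiTriv ∨ χ = chiSgn ∨ χ = chiStd := by
  unfold BS3 at h
  letI : DecidableEq (G3 → ℂ) := Classical.decEq _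
  rw [Finset.mem_insert, Finset.mem_insert, Finset.mem_singleton] at h
  exact h

lemma BS3_sum (f : (G3 → ℂ) → ℂ) :
    ∑ χ ∈ BS3, f χ = f chiTriv + f chiSgn + f chiStd := by
  unfold BS3; letI : DecidableEq (G3 → ℂ) := Classical.decEq _
  rw [Finset.sum_insert ?h1, Finset.sum_insert ?h2, Finset.sum_singleton]
  · ring
  case h2 => rw [Finset.mem_singleton]; exact ne23
  case h1 =>
    rw [Finset.mem_insert, Finset.mem_singleton]
    rintro (h | h)
    exacts [ne12 h, ne13 h]

-- the map
def Tfun (f : G3 → ℂ) : G3 → ℂ :=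
  innerChar G3 f chiTriv • chiTriv - innerChar G3 f chiSgn • chiStd
    - innerChar G3 f chiStd • chiSgn

lemma ic_add (f g ψ : G3 → ℂ) :
    innerChar G3 (f + g) ψ = innerChar G3 f ψ + innerChar G3 g ψ := by
  simp only [innerChar, Pi.add_apply, add_mul, Finset.sum_add_distrib, mul_add]

lemma ic_zsmul (z : ℤ) (f ψ : G3 → ℂ) :
    innerChar G3 (z • f) ψ = z • innerChar G3 f ψ := by
  have h : ∑ g : G3, (z • f) g * ψ g⁻¹ = (z : ℂ) * ∑ g : G3, f g * ψ g⁻¹ := by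
    rw [Finset.mul_sum]
    refine Finset.sum_congr rfl fun g _ => ?_
    simp only [Pi.smul_apply, zsmul_eq_mul]; ring
  rw [innerChar, innerChar, h, zsmul_eq_mul]; ring

lemma ic_add_right (f g ψ : G3 → ℂ) :
    innerChar G3 ψ (f + g) = innerChar G3 ψ f + innerChar G3 ψ g := by
  simp only [innerChar, Pi.add_apply, mul_add, Finset.sum_add_distrib]

lemma ic_zsmul_right (z : ℤ) (f ψ : G3 → ℂ) :
    innerChar G3 ψ (z • f) = z • innerChar G3 ψ f := by
  have h : ∑ g : G3, ψ g * (z • f) g⁻¹ = (z : ℂ) * ∑ g : G3, ψ g * f g⁻¹ := by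
    rw [Finset.mul_sum]
    refine Finset.sum_congr rfl fun g _ => ?_
    simp only [Pi.smul_apply, zsmul_eq_mul]; ring
  rw [innerChar, innerChar, h, zsmul_eq_mul]; ring

lemma ic_neg (f ψ : G3 → ℂ) : innerChar G3 (-f) ψ = -innerChar G3 f ψ := by
  have := ic_zsmul (-1) f ψ; simpa using this

lemma ic_neg_right (f ψ : G3 → ℂ) : innerChar G3 ψ (-f) = -innerChar G3 ψ f := by
  have := ic_zsmul_right (-1) f ψ; simpa using this

lemma Tfun_add (f g : G3 → ℂ) : Tfun (f + g) = Tfun f + Tfun g := by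
  funext x
  simp only [Tfun, ic_add, Pi.add_apply, Pi.sub_apply, Pi.smul_apply, smul_eq_mul]
  ring

lemma Tfun_zsmul (z : ℤ) (f : G3 → ℂ) : Tfun (z • f) = z • Tfun f := by
  rw [Tfun, ic_zsmul, ic_zsmul, ic_zsmul, Tfun]
  funext x
  simp only [Pi.smul_apply, Pi.sub_apply, smul_eq_mul, zsmul_eq_mul]
  ring

lemma Tfun_zero : Tfun 0 = 0 := by
  have := Tfun_zsmul 0 0; simpa using this

lemma Tfun_triv : Tfun chiTriv = chiTriv := by
  rw [Tfun, ip11, ip12, ip13]; module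

lemma Tfun_sgn : Tfun chiSgn = -chiStd := by
  rw [Tfun, ip21, ip22, ip23]; module

lemma Tfun_std : Tfun chiStd = -chiSgn := by
  rw [Tfun, ip31, ip32, ip33]; module

lemma Tfun_mem {f : G3 → ℂ} (hf : f ∈ ZIrr BS3) : Tfun f ∈ ZIrr BS3 := by
  induction hf using Submodule.span_induction with
  | mem x hx =>
    rcases mem_BS3 hx with rfl | rfl | rfl
    · rw [Tfun_triv]; exact Submodule.subset_span mem1
    · rw [Tfun_sgn]; exact Submodule.neg_mem _ (Submodule.subset_span mem3)
    · rw [Tfun_std]; exact Submodule.neg_mem _ (Submodule.subset_span mem2)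
  | zero => rw [Tfun_zero]; exact Submodule.zero_mem _
  | add x y hx hy ihx ihy => rw [Tfun_add]; exact Submodule.add_mem _ ihx ihy
  | smul z x hx ih => rw [Tfun_zsmul]; exact Submodule.smul_mem _ _ ih

lemma Tfun_invol {f : G3 → ℂ} (hf : f ∈ ZIrr BS3) : Tfun (Tfun f) = f := by
  induction hf using Submodule.span_induction with
  | mem x hx =>
    rcases mem_BS3 hx with rfl | rfl | rfl
    · rw [Tfun_triv, Tfun_triv]
    · rw [Tfun_sgn, show -chiStd = (-1 : ℤ) • chiStd by module, Tfun_zsmul, Tfun_std]; module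
    · rw [Tfun_std, show -chiSgn = (-1 : ℤ) • chiSgn by module, Tfun_zsmul, Tfun_sgn]; module
  | zero => rw [Tfun_zero, Tfun_zero]
  | add x y hx hy ihx ihy => rw [Tfun_add, Tfun_add, ihx, ihy]
  | smul z x hx ih => rw [Tfun_zsmul, Tfun_zsmul, ih]

def Ilin : ZIrr BS3 →ₗ[ℤ] ZIrr BS3 where
  toFun x := ⟨Tfun x.1, Tfun_mem x.2⟩
  map_add' x y := by ext1; exact Tfun_add x.1 y.1
  map_smul' z x := by ext1; exact Tfun_zsmul z x.1

def Iequiv : ZIrr BS3 ≃ₗ[ℤ] ZIrr BS3 :=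
  LinearEquiv.ofLinear Ilin Ilin
    (LinearMap.ext fun x => Subtype.ext (Tfun_invol x.2))
    (LinearMap.ext fun x => Subtype.ext (Tfun_invol x.2))

lemma Iequiv_coe (x : ZIrr BS3) : ((Iequiv x : ZIrr BS3) : G3 → ℂ) = Tfun x.1 := rfl


lemma ic_Tfun_gen {a b : G3 → ℂ} (ha : a ∈ BS3) (hb : b ∈ BS3) :
    innerChar G3 (Tfun a) (Tfun b) = innerChar G3 a b := by
  rcases mem_BS3 ha with rfl | rfl | rfl <;> rcases mem_BS3 hb with rfl | rfl | rfl <;>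
    simp only [Tfun_triv, Tfun_sgn, Tfun_std, ic_neg, ic_neg_right,
      ip11, ip12, ip13, ip21, ip22, ip23, ip31, ip32, ip33, neg_zero, neg_neg]

lemma ic_pres {x y : G3 → ℂ} (hx : x ∈ ZIrr BS3) (hy : y ∈ ZIrr BS3) :
    innerChar G3 (Tfun x) (Tfun y) = innerChar G3 x y := by
  induction hx, hy using Submodule.span_induction₂ with
  | mem_mem a b ha hb => exact ic_Tfun_gen ha hb
  | zero_left y hy => rw [Tfun_zero]; simp [innerChar]
  | zero_right x hx => rw [Tfun_zero]; simp [innerChar]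
  | add_left x y z hx hy hz h1 h2 => rw [Tfun_add, ic_add, ic_add, h1, h2]
  | add_right x y z hx hy hz h1 h2 => rw [Tfun_add, ic_add_right, ic_add_right, h1, h2]
  | smul_left r x y hx hy h => rw [Tfun_zsmul, ic_zsmul, ic_zsmul, h]
  | smul_right r x y hx hy h => rw [Tfun_zsmul, ic_zsmul_right, ic_zsmul_right, h]

lemma muI_eq (g h : G3) :
    muI Iequiv.toLinearMap g h
      = 1 - chiSgn g * chiStd h - chiStd g * chiSgn h := by
  have step : muI Iequiv.toLinearMap g h = ∑ χ ∈ BS3, χ g * Tfun χ h := by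
    rw [muI]
    exact Finset.sum_attach BS3 fun χ => χ g * Tfun χ h
  rw [step, BS3_sum fun χ => χ g * Tfun χ h]
  rw [Tfun_triv, Tfun_sgn, Tfun_std]
  simp only [triv_val, Pi.neg_apply]
  ring

lemma int_isIntegral (n : ℤ) : IsIntegral ℤ (n : ℂ) := by
  have h := isIntegral_algebraMap (R := ℤ) (A := ℂ) (x := n)
  simpa using h

lemma isIntegral_of_eq {x : ℂ} (n : ℤ) (h : x = n) : IsIntegral ℤ x := h ▸ int_isIntegral n

end S3PI

/-- For `G = S₃`, `p = 3`: the map `χ₁ ↦ χ₁`, `χ₂ ↦ -χ₃`, `χ₃ ↦ -χ₂` is a perfect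
self-isometry of the principal 3-block whose sign is not uniform. -/
theorem S3_nonuniform_perfect_isometry :
    ∃ (h₁ : chiTriv ∈ BS3) (h₂ : chiSgn ∈ BS3) (h₃ : chiStd ∈ BS3)
      (I : ZIrr BS3 ≃ₗ[ℤ] ZIrr BS3),
      IsPerfIso 3 BS3 BS3 I ∧
      ((I (elt chiTriv h₁) : ZIrr BS3) : Equiv.Perm (Fin 3) → ℂ) = chiTriv ∧
      ((I (elt chiSgn h₂) : ZIrr BS3) : Equiv.Perm (Fin 3) → ℂ) = -chiStd ∧
      ((I (elt chiStd h₃) : ZIrr BS3) : Equiv.Perm (Fin 3) → ℂ) = -chiSgn ∧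
      ¬ ((∀ χ (hχ : χ ∈ BS3), ∃ ψ ∈ BS3,
            ((I (elt χ hχ) : ZIrr BS3) : Equiv.Perm (Fin 3) → ℂ) = ψ) ∨
         (∀ χ (hχ : χ ∈ BS3), ∃ ψ ∈ BS3,
            ((I (elt χ hχ) : ZIrr BS3) : Equiv.Perm (Fin 3) → ℂ) = -ψ)) := by
  refine ⟨S3PI.mem1, S3PI.mem2, S3PI.mem3, S3PI.Iequiv, ⟨?_, ?_, ?_⟩, ?_, ?_, ?_, ?_⟩
  · -- inner product preservation
    intro x y
    exact S3PI.ic_pres x.2 y.2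
  · -- separation
    intro g h hx
    rcases S3PI.key g with ⟨hg1, hg2, hg3, -⟩ | ⟨hg1, hg2, hg3, -⟩ | ⟨hg1, hg2, hg3, -⟩ <;>
      rcases S3PI.key h with ⟨hh1, hh2, hh3, -⟩ | ⟨hh1, hh2, hh3, -⟩ | ⟨hh1, hh2, hh3, -⟩ <;>
      first
        | (exfalso; rcases hx with ⟨h1, h2⟩ | ⟨h1, h2⟩ <;>
            first | exact h2 hh3 | exact h2 hg3 | exact hg3 h1 | exact hh3 h1)
        | (rw [S3PI.muI_eq, hg1, hg2, hh1, hh2]; norm_num)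
  · -- integrality
    intro g h
    rcases S3PI.key g with ⟨hg1, hg2, -, hg4⟩ | ⟨hg1, hg2, -, hg4⟩ | ⟨hg1, hg2, -, hg4⟩ <;>
      rcases S3PI.key h with ⟨hh1, hh2, -, hh4⟩ | ⟨hh1, hh2, -, hh4⟩ | ⟨hh1, hh2, -, hh4⟩ <;>
      rw [S3PI.muI_eq, hg1, hg2, hh1, hh2, hg4, hh4] <;>
      constructor <;>
      first
        | (apply S3PI.isIntegral_of_eq 0; norm_num; done)
        | (apply S3PI.isIntegral_of_eq 1; norm_num; done)
        | (apply S3PI.isIntegral_of_eq (-1); norm_num; done)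
        | (apply S3PI.isIntegral_of_eq 3; norm_num; done)
  · exact S3PI.Tfun_triv
  · exact S3PI.Tfun_sgn
  · exact S3PI.Tfun_std
  · rintro (h | h)
    · obtain ⟨ψ, hψ, hval⟩ := h chiSgn S3PI.mem2
      have hval' : -chiStd = ψ := by rw [← S3PI.Tfun_sgn]; exact hval
      rcases S3PI.mem_BS3 hψ with rfl | rfl | rfl <;>
        · have hv := congrFun hval' 1
          norm_num [Pi.neg_apply] at hv
    · obtain ⟨ψ, hψ, hval⟩ := h chiTriv S3PI.mem1
      have hval' : chiTriv = -ψ := by rw [← S3PI.Tfun_triv]; exact hval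
      rcases S3PI.mem_BS3 hψ with rfl | rfl | rfl <;>
        · have hv := congrFun hval' 1
          norm_num [Pi.neg_apply] at hv


end
end

section
/- If B and B' are perfectly isometric p-blocks, then for every i ≥ 0 the number k_i(B) of irreducible characters of height i in B equals k_i(B'); i.e., perfect isometries preserve the height distribution of irreducible characters. -/
/-! An isometry of the lattices `ℤ^Irr(B) → ℤ^Irr(B')` sends each `χ` to `±χ'` for a bijection
`χ ↦ χ'`, so `μ(g, 1) = ∑ ±χ'(1) χ(g)`. By the integrality condition, `μ(·, 1) / |H|_p` has
algebraic-integer values; pairing it with `χ` and using that the central character values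
`|K| χ(g) / χ(1)` are algebraic integers shows that `χ(1) |H|_p` divides `|G| χ'(1)`. With the
symmetric divisibility, `v_p(χ(1)) - v_p|G| = v_p(χ'(1)) - v_p|H|` for every `χ`, so `χ ↦ χ'`
preserves heights. -/

open scoped BigOperators
open Finset

noncomputable section

/-- The data of a `p`-block `B` of a finite group `G`: the irreducible ordinary
characters `χ i` (`i : ι`, so `k(B) = |ι|`), the irreducible Brauer characters `φ j`
(`j : κ`, so `l(B) = |κ|`), the decomposition matrix `Q`, the degrees, and the
standard facts relating them: `χ = Q·φ` on `p`-regular elements, block orthogonality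
(Osima's characterization of unions of blocks), `Q` has `ℤ`-linearly independent
columns, and every generalized character of `B` vanishing on `p`-singular elements is
a `ℤ`-linear combination of the projective indecomposable characters (i.e. its
coefficient vector lies in the `ℤ`-column span of `Q`). -/
structure BlockData (p : ℕ) (G : Type) [Group G] [Fintype G] where
  ι : Type
  κ : Type
  [fι : Fintype ι]
  [fκ : Fintype κ]
  [dι : DecidableEq ι]
  [dκ : DecidableEq κ]
  [nι : Nonempty ι]
  χ : ι → G → ℂ
  φ : κ → G → ℂ
  Q : Matrix ι κ ℤ
  deg : ι → ℕ
  irr : ∀ i, IsIrrChar G (χ i)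
  inj : Function.Injective χ
  degpos : ∀ i, 0 < deg i
  hdeg : ∀ i, χ i 1 = (deg i : ℂ)
  blockOrth : ∀ g h : G, pRegular p g → ¬ pRegular p h → ∑ i, χ i g * χ i h = 0
  decomp : ∀ i g, pRegular p g → χ i g = ∑ j, (Q i j : ℂ) * φ j g
  colIndep : LinearIndependent ℤ fun j i => Q i j
  vanishing : ∀ c : ι → ℤ, (∀ g, ¬ pRegular p g → ∑ i, (c i : ℂ) * χ i g = 0) →
    ∃ a : κ → ℤ, ∀ i, c i = ∑ j, Q i j * a j

attribute [instance] BlockData.fι BlockData.fκ BlockData.dι BlockData.dκ BlockData.nι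

variable {p : ℕ} {G H : Type} [Group G] [Fintype G] [Group H] [Fintype H]

/-- Broué's function `μ_I` for an isometry given in coordinates with respect to the
orthonormal bases `Irr(B)`, `Irr(B')`. -/
def muD (D : BlockData p G) (E : BlockData p H)
    (I : (D.ι → ℤ) ≃ₗ[ℤ] (E.ι → ℤ)) (g : G) (h : H) : ℂ :=
  ∑ i, D.χ i g * ∑ i', ((I (Pi.single i 1)) i' : ℂ) * E.χ i' h

/-- A perfect isometry between blocks given by their block data, in coordinates. -/
def IsPerfIsoD (D : BlockData p G) (E : BlockData p H)
    (I : (D.ι → ℤ) ≃ₗ[ℤ] (E.ι → ℤ)) : Prop :=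
  (∀ c c' : D.ι → ℤ, ∑ i', I c i' * I c' i' = ∑ i, c i * c' i) ∧
  (∀ (g : G) (h : H), Xor' (pRegular p g) (pRegular p h) → muD D E I g h = 0) ∧
  (∀ (g : G) (h : H), IsIntegral ℤ (muD D E I g h / (centOrderP p g : ℂ)) ∧
      IsIntegral ℤ (muD D E I g h / (centOrderP p h : ℂ)))

/-- The minimal `p`-adic valuation of a character degree in the block. -/
def BlockData.minval (D : BlockData p G) : ℕ :=
  sInf (Set.range fun i => (D.deg i).factorization p)

/-- The defect `d` of the block, defined by `p^{a-d} = min_χ χ(1)_p` where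
`|G|_p = p^a`. -/
def BlockData.defect (D : BlockData p G) : ℕ :=
  (Fintype.card G).factorization p - D.minval

/-- The height of the irreducible character `χ i`, defined by
`χ i (1)_p = p^{a-d+h}`. -/
def BlockData.height (D : BlockData p G) (i : D.ι) : ℕ :=
  (D.deg i).factorization p - D.minval

open CategoryTheory

section SignedPermutation

open Matrix

variable {ι κ : Type} [Fintype ι] [Fintype κ] [DecidableEq ι] [DecidableEq κ]

theorem exists_eq_single_of_dotProduct_self_eq_one {v : κ → ℤ} (hv : v ⬝ᵥ v = 1) :
    ∃ (j : κ) (u : ℤˣ), v = Pi.single j (u : ℤ) := by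
  obtain ⟨j, hj⟩ : ∃ j, v j ≠ 0 := by
    by_contra! h
    simp [dotProduct, h] at hv
  have hsq : ∀ k, 0 ≤ v k * v k := fun k => mul_self_nonneg _
  have hsplit : v j * v j + ∑ k ∈ univ.erase j, v k * v k = 1 :=
    (Finset.add_sum_erase _ _ (mem_univ j)).trans hv
  have hpos : 0 < v j * v j := mul_self_pos.mpr hj
  have hrest : ∑ k ∈ univ.erase j, v k * v k = 0 := by
    have := Finset.sum_nonneg fun k (_ : k ∈ univ.erase j) => hsq k
    omega
  have hunit : IsUnit (v j) := .of_mul_eq_one (v j) (by omega)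
  rw [Finset.sum_eq_zero_iff_of_nonneg fun k _ => hsq k] at hrest
  refine ⟨j, hunit.unit, funext fun k => ?_⟩
  rcases eq_or_ne k j with rfl | hk
  · simp
  · simp [hk, mul_self_eq_zero.mp (hrest k (mem_erase.mpr ⟨hk, mem_univ _⟩))]

theorem LinearEquiv.exists_apply_single_eq_single_of_dotProduct (I : (ι → ℤ) ≃ₗ[ℤ] (κ → ℤ))
    (hI : ∀ c c', I c ⬝ᵥ I c' = c ⬝ᵥ c') :
    ∃ (σ : ι ≃ κ) (ε : ι → ℤˣ), ∀ i, I (Pi.single i 1) = Pi.single (σ i) (ε i : ℤ) := by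
  choose σ ε hσ using fun i => exists_eq_single_of_dotProduct_self_eq_one
    (by rw [hI, single_dotProduct, Pi.single_eq_same, one_mul] : I (Pi.single i 1) ⬝ᵥ _ = 1)
  have hinj : Function.Injective σ := by
    intro i i' hii'
    have h := hI (Pi.single i 1) (Pi.single i' 1)
    rw [hσ, hσ, hii', single_dotProduct, single_dotProduct, Pi.single_eq_same, one_mul] at h
    by_contra hne
    simp [Pi.single_eq_of_ne hne] at h
  have hcard : Fintype.card ι = Fintype.card κ := by
    simpa using I.finrank_eq
  exact ⟨.ofBijective σ ((Fintype.bijective_iff_injective_and_card σ).mpr ⟨hinj, hcard⟩), ε, hσ⟩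

end SignedPermutation

theorem Int.dvd_of_isIntegral_div {m n : ℤ} (hm : m ≠ 0) (h : IsIntegral ℤ ((n : ℂ) / m)) :
    m ∣ n := by
  have hq : IsIntegral ℤ ((n : ℚ) / m) := by
    rw [← isIntegral_algebraMap_iff (algebraMap ℚ ℂ).injective]
    simpa using h
  obtain ⟨z, hz⟩ := IsIntegrallyClosed.isIntegral_iff.mp hq
  refine ⟨z, ?_⟩
  rw [algebraMap_int_eq, eq_intCast, eq_div_iff (by exact_mod_cast hm)] at hz
  exact_mod_cast hz.symm.trans (mul_comm _ _)

open CategoryTheory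

namespace FDRep

omit [Fintype G] in
theorem commute_ρ_sum_ρ (V : FDRep ℂ G) {s : Finset G}
    (hs : ∀ h x, x ∈ s → h * x * h⁻¹ ∈ s) (h : G) : Commute (V.ρ h) (∑ x ∈ s, V.ρ x) := by
  simp only [Commute, SemiconjBy, Finset.mul_sum, Finset.sum_mul, ← map_mul]
  refine Finset.sum_nbij' (fun x => h * x * h⁻¹) (fun x => h⁻¹ * x * h) (fun x hx => hs h x hx)
    (fun x hx => by simpa using hs h⁻¹ x hx) (fun x _ => by group) (fun x _ => by group)
    (fun x _ => by group)

theorem isIntegral_sum_ρ (V : FDRep ℂ G) (s : Finset G) : IsIntegral ℤ (∑ x ∈ s, V.ρ x) := by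
  have := (IsIntegral.of_finite ℤ (∑ x ∈ s, MonoidAlgebra.single x (1 : ℤ))).map
    (MonoidAlgebra.lift ℤ (Module.End ℂ V) G V.ρ)
  simpa [map_sum, MonoidAlgebra.lift_single] using this

theorem isIntegral_sum_character_div (V : FDRep ℂ G) [Simple V] {s : Finset G}
    (hs : ∀ h x, x ∈ s → h * x * h⁻¹ ∈ s) :
    IsIntegral ℤ ((∑ x ∈ s, V.character x) / V.character 1) := by
  rcases eq_or_ne (V.character 1) 0 with h0 | h0
  · simp [h0, isIntegral_zero]
  have : Nontrivial V := Module.nontrivial_of_finrank_pos (by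
    rw [FDRep.char_one] at h0; exact Nat.pos_of_ne_zero (by exact_mod_cast h0))
  obtain ⟨c, hc⟩ := endomorphism_simple_eq_smul_id ℂ
    (show V ⟶ V from ⟨FGModuleCat.ofHom (∑ x ∈ s, V.ρ x), fun h => by
      ext v; exact LinearMap.congr_fun (V.commute_ρ_sum_ρ hs h).symm v⟩)
  have hsum : ∑ x ∈ s, V.ρ x = algebraMap ℂ (Module.End ℂ V) c := by
    rw [Module.algebraMap_end_eq_smul_id]; exact (congrArg (fun f => f.hom.hom.hom) hc).symm
  have hc_int : IsIntegral ℤ c := by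
    rw [← isIntegral_algebraMap_iff (algebraMap ℂ (Module.End ℂ V)).injective, ← hsum]
    exact V.isIntegral_sum_ρ s
  have htrace : ∑ x ∈ s, V.character x = c * V.character 1 := by
    have := congrArg (LinearMap.trace ℂ V) hsum
    simpa [map_sum, Module.algebraMap_end_eq_smul_id, FDRep.char_one, FDRep.character] using this
  rwa [htrace, mul_div_cancel_right₀ _ h0]

end FDRep

namespace IsIrrChar

variable {χ ψ : G → ℂ}

theorem conj (hχ : IsIrrChar G χ) (x g : G) : χ (x * g * x⁻¹) = χ g := by
  obtain ⟨V, -, rfl⟩ := hχ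
  exact FDRep.char_conj V g x

theorem sum_mul_inv (hχ : IsIrrChar G χ) (hψ : IsIrrChar G ψ) :
    ∑ g, χ g * ψ g⁻¹ = if χ = ψ then (Fintype.card G : ℂ) else 0 := by
  obtain ⟨V, _, rfl⟩ := hχ
  obtain ⟨W, _, rfl⟩ := hψ
  have hG : (Nat.card G : ℂ) ≠ 0 := by simp
  have : Invertible (Nat.card G : ℂ) := invertibleOfNonzero hG
  split_ifs with heq
  · have h := FDRep.char_orthonormal V V
    rw [if_pos ⟨Iso.refl V⟩, inv_mul_eq_one₀ hG] at h
    rw [← heq, ← h, Nat.card_eq_fintype_card]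
  · have h := FDRep.char_orthonormal V W
    rw [if_neg fun ⟨e⟩ => heq (FDRep.char_iso e)] at h
    simpa [hG] using h

theorem isIntegral_sum_mul_div (hχ : IsIrrChar G χ) {f : G → ℂ}
    (hf : ∀ x g, f (x * g * x⁻¹) = f g) (hint : ∀ g, IsIntegral ℤ (f g)) :
    IsIntegral ℤ ((∑ g, χ g * f g) / χ 1) := by
  classical
  obtain ⟨V, _, rfl⟩ := hχ
  rw [← Finset.sum_fiberwise univ ConjClasses.mk, Finset.sum_div]
  refine IsIntegral.sum _ fun c _ => ?_
  obtain ⟨g, rfl⟩ := ConjClasses.mk_surjective c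
  set s := univ.filter fun x => ConjClasses.mk x = ConjClasses.mk g
  have hs : ∀ h x, x ∈ s → h * x * h⁻¹ ∈ s := fun h x hx => by
    simpa [s, ← (mem_filter.mp hx).2, ConjClasses.mk_eq_mk_iff_isConj] using
      (isConj_iff.mpr ⟨h, rfl⟩).symm
  have hf_s : ∀ x ∈ s, f x = f g := fun x hx => by
    obtain ⟨y, rfl⟩ := isConj_iff.mp (ConjClasses.mk_eq_mk_iff_isConj.mp (mem_filter.mp hx).2).symm
    exact hf y g
  rw [Finset.sum_congr rfl fun x hx => by rw [hf_s x hx], ← Finset.sum_mul, ← div_mul_eq_mul_div]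
  exact (V.isIntegral_sum_character_div hs).mul (hint g)

theorem factorization_add_le [Fact p.Prime] (hχ : IsIrrChar G χ) {d : ℕ}
    (hd : χ 1 = d) (hd0 : d ≠ 0) {b : ℕ} {f : G → ℂ} (hf : ∀ x g, f (x * g * x⁻¹) = f g)
    (hint : ∀ g, IsIntegral ℤ (f g / (p : ℂ) ^ b)) {w : ℤ} (hw : w ≠ 0)
    (hsum : ∑ g, χ g * f g = Fintype.card G * w) :
    d.factorization p + b ≤ (Fintype.card G).factorization p + w.natAbs.factorization p := by
  have hp : p ≠ 0 := (Fact.out : p.Prime).ne_zero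
  have hG : Fintype.card G ≠ 0 := Fintype.card_ne_zero
  have h := hχ.isIntegral_sum_mul_div (f := fun g => f g / (p : ℂ) ^ b)
    (fun x g => by rw [hf]) hint
  have hdvd : ((d * p ^ b : ℕ) : ℤ) ∣ Fintype.card G * w := by
    refine Int.dvd_of_isIntegral_div (by positivity) ?_
    convert h using 1
    simp only [← mul_div_assoc, ← Finset.sum_div, hsum, hd]
    push_cast
    ring
  have hdvd' : d * p ^ b ∣ Fintype.card G * w.natAbs := by
    simpa [Int.natAbs_mul] using Int.natAbs_dvd_natAbs.mpr hdvd
  have := (Nat.factorization_le_iff_dvd (by positivity) (by simp [hG, hw])).mpr hdvd' p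
  simpa [Nat.factorization_mul, hd0, hp, hG, hw, (Fact.out : p.Prime).factorization_self] using this

end IsIrrChar

namespace BlockData

theorem sum_χ_mul_χ_inv (D : BlockData p G) (i k : D.ι) :
    ∑ g, D.χ i g * D.χ k g⁻¹ = if i = k then (Fintype.card G : ℂ) else 0 := by
  rw [(D.irr i).sum_mul_inv (D.irr k)]
  exact if_congr D.inj.eq_iff rfl rfl

theorem factorization_deg_add_le [Fact p.Prime] (D : BlockData p G) (c : D.ι → ℤ) {b : ℕ}
    (hint : ∀ g, IsIntegral ℤ ((∑ k, (c k : ℂ) * D.χ k g) / (p : ℂ) ^ b)) {i : D.ι}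
    (hc : c i ≠ 0) :
    (D.deg i).factorization p + b ≤
      (Fintype.card G).factorization p + (c i).natAbs.factorization p := by
  refine (D.irr i).factorization_add_le (D.hdeg i) (D.degpos i).ne'
    (f := fun g => ∑ k, (c k : ℂ) * D.χ k g⁻¹) (fun x g => ?_) (fun g => hint g⁻¹) hc ?_
  · simp only [mul_inv_rev, inv_inv, ← mul_assoc, (D.irr _).conj]
  · simp only [Finset.mul_sum, mul_left_comm (D.χ i _)]
    rw [Finset.sum_comm]
    simp only [← Finset.mul_sum, sum_χ_mul_χ_inv, mul_ite, mul_zero, Finset.sum_ite_eq,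
      Finset.mem_univ, if_true]
    ring

theorem minval_le (D : BlockData p G) (i : D.ι) : D.minval ≤ (D.deg i).factorization p :=
  Nat.sInf_le ⟨i, rfl⟩

theorem exists_factorization_deg_eq_minval (D : BlockData p G) :
    ∃ i, (D.deg i).factorization p = D.minval :=
  Nat.sInf_mem (Set.range_nonempty _)

theorem height_apply_eq (D : BlockData p G) (E : BlockData p H) (σ : D.ι ≃ E.ι) {a b : ℕ}
    (h : ∀ i, (D.deg i).factorization p + a = (E.deg (σ i)).factorization p + b) (i : D.ι) :
    E.height (σ i) = D.height i := by
  have hmin : D.minval + a = E.minval + b := by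
    obtain ⟨i₀, hi₀⟩ := D.exists_factorization_deg_eq_minval
    obtain ⟨j₀, hj₀⟩ := E.exists_factorization_deg_eq_minval
    have h₀ := h (σ.symm j₀)
    rw [σ.apply_symm_apply] at h₀
    have := h i₀
    have := D.minval_le (σ.symm j₀)
    have := E.minval_le (σ i₀)
    omega
  have := h i
  have := D.minval_le i
  have := E.minval_le (σ i)
  unfold height
  omega

end BlockData

theorem centOrderP_one : centOrderP p (1 : G) = p ^ (Fintype.card G).factorization p := by
  rw [centOrderP, pPart, Subgroup.centralizer_eq_top_iff_subset.mpr
    (Set.singleton_subset_iff.mpr (Subgroup.center G).one_mem), Subgroup.card_top,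
    Nat.card_eq_fintype_card]

section

variable {D : BlockData p G} {E : BlockData p H} {I : (D.ι → ℤ) ≃ₗ[ℤ] (E.ι → ℤ)}
  {σ : D.ι ≃ E.ι} {ε : D.ι → ℤˣ}

theorem muD_eq_sum (hI : ∀ i, I (Pi.single i 1) = Pi.single (σ i) (ε i : ℤ)) (g : G) (h : H) :
    muD D E I g h = ∑ k, (ε k : ℂ) * D.χ k g * E.χ (σ k) h := by
  refine Finset.sum_congr rfl fun k _ => ?_
  rw [hI, Finset.sum_eq_single (σ k) (fun j _ hj => by simp [Pi.single_eq_of_ne hj]) (by simp)]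
  simp only [Pi.single_eq_same]
  ring

theorem muD_one_right (hI : ∀ i, I (Pi.single i 1) = Pi.single (σ i) (ε i : ℤ)) (g : G) :
    muD D E I g 1 = ∑ k, ((ε k * E.deg (σ k) : ℤ) : ℂ) * D.χ k g := by
  simp only [muD_eq_sum hI, E.hdeg]
  push_cast
  exact Finset.sum_congr rfl fun k _ => by ring

theorem muD_one_left (hI : ∀ i, I (Pi.single i 1) = Pi.single (σ i) (ε i : ℤ)) (h : H) :
    muD D E I 1 h = ∑ k, ((ε (σ.symm k) * D.deg (σ.symm k) : ℤ) : ℂ) * E.χ k h := by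
  rw [muD_eq_sum hI, ← σ.sum_comp]
  simp only [σ.symm_apply_apply, D.hdeg]
  push_cast
  exact Finset.sum_congr rfl fun k _ => by ring

end

/-- Perfect isometries preserve the height distribution: if `B` and `B'` are
perfectly isometric, then `k_i(B) = k_i(B')` for every `i ≥ 0`. -/
theorem perfect_isometry_preserves_heights (p : ℕ) [Fact p.Prime]
    (G H : Type) [Group G] [Fintype G] [Group H] [Fintype H]
    (D : BlockData p G) (E : BlockData p H)
    (I : (D.ι → ℤ) ≃ₗ[ℤ] (E.ι → ℤ)) (hI : IsPerfIsoD D E I) :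
    ∀ n : ℕ, (Finset.univ.filter fun i : D.ι => D.height i = n).card =
      (Finset.univ.filter fun i' : E.ι => E.height i' = n).card := by
  obtain ⟨hiso, -, hint⟩ := hI
  obtain ⟨σ, ε, hσ⟩ := I.exists_apply_single_eq_single_of_dotProduct hiso
  have hval : ∀ i, (D.deg i).factorization p + (Fintype.card H).factorization p =
      (E.deg (σ i)).factorization p + (Fintype.card G).factorization p := by
    intro i
    have hD := D.factorization_deg_add_le _ (i := i) (fun g => by
      simpa only [muD_one_right hσ, centOrderP_one, Nat.cast_pow] using (hint g 1).2)
      (mul_ne_zero (ε i).ne_zero (Int.natCast_ne_zero.mpr (E.degpos (σ i)).ne'))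
    have hE := E.factorization_deg_add_le _ (i := σ i) (fun h => by
      simpa only [muD_one_left hσ, centOrderP_one, Nat.cast_pow] using (hint 1 h).1)
      (mul_ne_zero (ε _).ne_zero (Int.natCast_ne_zero.mpr (D.degpos _).ne'))
    simp only [σ.symm_apply_apply, Int.natAbs_mul, Int.units_natAbs, Int.natAbs_natCast,
      one_mul] at hD hE
    omega
  intro n
  exact Finset.card_equiv σ fun i => by simp [BlockData.height_apply_eq D E σ hval i]

end
end
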